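/- Let Q_GHZ be uniform on {x ∈ F_2^3 : x1+x2+x3=0} and define the GHZ game: on input (x1,x2,x3) ← Q_GHZ, players output bits (y1,y2,y3) and win iff y1 ⊕ y2 ⊕ y3 = x1 ∨ x2 ∨ x3, where each y_i depends only on x_i. Then the maximum winning probability over all deterministic strategies f_1, f_2, f_3 : F_2 → F_2 is exactly 3/4. -/

import Mathlib

/-!
No deterministic strategy wins on all four queries: each value `fᵢ(b)` enters the winning
conditions of exactly two queries, so the four left-hand sides `XOR` to `0`, whereas the
right-hand sides `XOR` to `0 ⊕ 1 ⊕ 1 ⊕ 1 = 1`. Hence at most three of the four queries are won.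
Three are won when the first player always answers `1` and the others `0`, losing only on `000`.
-/

open Finset

/-- The winning probability of a deterministic strategy `(f₁, f₂, f₃)` in the GHZ game:
queries are uniform on `{x ∈ F₂³ : x₁ + x₂ + x₃ = 0}` (the four strings
`000, 011, 101, 110`), and the players win iff
`f₁(x₁) ⊕ f₂(x₂) ⊕ f₃(x₃) = x₁ ∨ x₂ ∨ x₃`. -/
noncomputable def ghzWinProb (f₁ f₂ f₃ : Bool → Bool) : ℝ :=
  (1 / 4) * ∑ x ∈ (Finset.univ.filter
      (fun x : Bool × Bool × Bool => xor x.1 (xor x.2.1 x.2.2) = false)),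
    if xor (f₁ x.1) (xor (f₂ x.2.1) (f₃ x.2.2)) = (x.1 || x.2.1 || x.2.2)
    then (1 : ℝ) else 0

abbrev ghzQueries : Finset (Bool × Bool × Bool) :=
  univ.filter fun x => xor x.1 (xor x.2.1 x.2.2) = false

abbrev GhzWins (f₁ f₂ f₃ : Bool → Bool) (x : Bool × Bool × Bool) : Prop :=
  xor (f₁ x.1) (xor (f₂ x.2.1) (f₃ x.2.2)) = (x.1 || x.2.1 || x.2.2)

lemma card_ghzQueries : #ghzQueries = 4 := by decide

lemma exists_mem_ghzQueries_not_ghzWins (f₁ f₂ f₃ : Bool → Bool) :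
    ∃ x ∈ ghzQueries, ¬ GhzWins f₁ f₂ f₃ x := by
  by_contra! hwin
  have h₀ := hwin (false, false, false) (by decide)
  have h₁ := hwin (false, true, true) (by decide)
  have h₂ := hwin (true, false, true) (by decide)
  have h₃ := hwin (true, true, false) (by decide)
  have h := congrArg₂ xor (congrArg₂ xor h₀ h₁) (congrArg₂ xor h₂ h₃)
  simp [Bool.xor_left_comm] at h

lemma ghzWinProb_eq_card (f₁ f₂ f₃ : Bool → Bool) :
    ghzWinProb f₁ f₂ f₃ = #(ghzQueries.filter (GhzWins f₁ f₂ f₃)) / 4 := by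
  rw [ghzWinProb, sum_boole]
  ring

lemma ghzWinProb_le (f₁ f₂ f₃ : Bool → Bool) : ghzWinProb f₁ f₂ f₃ ≤ 3 / 4 := by
  have hlt : #(ghzQueries.filter (GhzWins f₁ f₂ f₃)) < 4 :=
    card_ghzQueries ▸
      card_lt_card (filter_ssubset.2 (exists_mem_ghzQueries_not_ghzWins f₁ f₂ f₃))
  rw [ghzWinProb_eq_card]
  gcongr
  exact_mod_cast Nat.le_of_lt_succ hlt

lemma ghzWinProb_true_false_false :
    ghzWinProb (fun _ => true) (fun _ => false) (fun _ => false) = 3 / 4 := by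
  rw [ghzWinProb_eq_card, show #(ghzQueries.filter (GhzWins _ _ _)) = 3 by decide]
  norm_num

/-- The value of the GHZ game over deterministic strategies is exactly `3/4`. -/
theorem stmt_18 :
    IsGreatest {p : ℝ | ∃ f₁ f₂ f₃ : Bool → Bool, p = ghzWinProb f₁ f₂ f₃}
      (3 / 4) := by
  refine ⟨⟨_, _, _, ghzWinProb_true_false_false.symm⟩, ?_⟩
  rintro p ⟨f₁, f₂, f₃, rfl⟩
  exact ghzWinProb_le f₁ f₂ f₃
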